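/- arXiv:1509.09095 — 10 statements merged into one kernel-verified Lean document; each statement's English description precedes it below -/
import Mathlib

section
/- Suppose u is a symmetric function on finite tuples of nonnegative reals satisfying: u(∅) = 0, u(0, x₂, …, x_k) = u(x₂, …, x_k), and the history-independence property u(x_S, x̄, x) - u(x_S, x̄, 0) = u(x_S, x̲, x) - u(x_S, x̲, 0) whenever x ≤ x̲ < x̄ (Assumption 2). Define g_ℓ(x) = u(x, …, x) (ℓ copies) and f_ℓ(x) = g_ℓ(x) - g_{ℓ-1}(x). Then for every tuple with ordered entries x₁ ≥ x₂ ≥ ⋯ ≥ x_k, u(x₁, …, x_k) = Σ_{ℓ=1}^{k} f_ℓ(x_ℓ). -/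
open scoped NNReal

/-- `u` is symmetric: invariant under permutations of its arguments. -/
def IsSymmU (u : List ℝ≥0 → ℝ) : Prop := ∀ l l' : List ℝ≥0, l.Perm l' → u l = u l'

/-- `u` is nondecreasing in each argument. -/
def IsMonoU (u : List ℝ≥0 → ℝ) : Prop :=
  ∀ l l' : List ℝ≥0, List.Forall₂ (· ≤ ·) l l' → u l ≤ u l'

/-- `u` is submodular: `u(x∧y)+u(x∨y) ≤ u(x)+u(y)` for equal-length tuples. -/
def IsSubmodU (u : List ℝ≥0 → ℝ) : Prop := ∀ l l' : List ℝ≥0, l.length = l'.length →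
  u (List.zipWith min l l') + u (List.zipWith max l l') ≤ u l + u l'

/-- `u` is continuous on tuples of each fixed length. -/
def IsContU (u : List ℝ≥0 → ℝ) : Prop :=
  ∀ n : ℕ, Continuous (fun v : Fin n → ℝ≥0 => u (List.ofFn v))

/-- Assumption 1: `u(∅)=0`, prepending a zero leaves `u` unchanged, `u` nonnegative,
continuous, symmetric, nondecreasing and submodular. -/
def Assumption1 (u : List ℝ≥0 → ℝ) : Prop :=
  u [] = 0 ∧ (∀ l, u (0 :: l) = u l) ∧ (∀ l, 0 ≤ u l) ∧
    IsContU u ∧ IsSymmU u ∧ IsMonoU u ∧ IsSubmodU u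

/-- Assumption 2: the benefit of raising an argument from `0` to `xi` does not
depend on the values of other arguments exceeding `xi`. -/
def Assumption2 (u : List ℝ≥0 → ℝ) : Prop :=
  ∀ (l : List ℝ≥0) (xi xlo xhi : ℝ≥0), xi ≤ xlo → xlo < xhi →
    u (l ++ [xhi, xi]) - u (l ++ [xhi, 0]) = u (l ++ [xlo, xi]) - u (l ++ [xlo, 0])

/-
Under symmetry, Assumption 2 says that the marginal value `u (x :: l) - u l` of an argument `x`
does not change when an argument `y ≥ x` of `l` is lowered to `x`. Lowering the entries of `l`
one at a time, the marginal value of `x` on top of a tuple `l` whose entries are all at least `x`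
equals its marginal value on top of `|l|` copies of `x`, which is `f_{|l|+1}(x)`. Adding the
entries of a decreasing tuple from the largest to the smallest then telescopes `u`.
-/

open List

section

variable {u : List ℝ≥0 → ℝ}

theorem Assumption2.marginal_eq_of_le (hA2 : Assumption2 u) (hsym : IsSymmU u)
    (hzero : ∀ l, u (0 :: l) = u l) {x y : ℝ≥0} (hxy : x ≤ y) (l : List ℝ≥0) :
    u (x :: y :: l) - u (y :: l) = u (x :: x :: l) - u (x :: l) := by
  rcases hxy.eq_or_lt with rfl | hlt
  · rfl
  have hswap : ∀ a b : ℝ≥0, u (l ++ [b, a]) = u (a :: b :: l) := fun a b =>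
    hsym _ _ (perm_append_comm.trans (Perm.swap a b l))
  simpa only [hswap, hzero] using hA2 l x x y le_rfl hlt

theorem Assumption2.marginal_eq_replicate (hA2 : Assumption2 u) (hsym : IsSymmU u)
    (hzero : ∀ l, u (0 :: l) = u l) {x : ℝ≥0} (m : List ℝ≥0) (hm : ∀ y ∈ m, x ≤ y)
    (l : List ℝ≥0) :
    u (x :: (m ++ l)) - u (m ++ l)
      = u (x :: (replicate m.length x ++ l)) - u (replicate m.length x ++ l) := by
  induction m generalizing l with
  | nil => rfl
  | cons y m ih =>
    have hmove : (m ++ x :: l).Perm (x :: (m ++ l)) := perm_middle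
    calc u (x :: y :: (m ++ l)) - u (y :: (m ++ l))
        = u (x :: x :: (m ++ l)) - u (x :: (m ++ l)) :=
          hA2.marginal_eq_of_le hsym hzero (hm y mem_cons_self) _
      _ = u (x :: (m ++ x :: l)) - u (m ++ x :: l) := by
          rw [hsym _ _ hmove, hsym _ _ (hmove.cons x)]
      _ = _ := by
          rw [ih (fun z hz => hm z (mem_cons_of_mem y hz)), length_cons, replicate_succ',
            append_assoc, singleton_append]

theorem Assumption2.marginal_eq_diag (hA2 : Assumption2 u) (hsym : IsSymmU u)
    (hzero : ∀ l, u (0 :: l) = u l) {x : ℝ≥0} (m : List ℝ≥0) (hm : ∀ y ∈ m, x ≤ y) :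
    u (m ++ [x]) - u m = u (replicate (m.length + 1) x) - u (replicate m.length x) := by
  simpa only [append_nil, hsym _ _ (perm_append_singleton x m), replicate_succ] using
    hA2.marginal_eq_replicate hsym hzero m hm []

end

/-- Lemma 2(a): under symmetry, `u(∅)=0`, zero-absorption and Assumption 2,
`u` decomposes on decreasingly ordered tuples as `u(x₁,…,x_k) = Σ_ℓ f_ℓ(x_ℓ)`
where `f_ℓ(x) = u(x,…,x) (ℓ times) - u(x,…,x) (ℓ-1 times)`. -/
theorem stmt_4 (u : List ℝ≥0 → ℝ)
    (hsym : IsSymmU u) (hempty : u [] = 0) (hzero : ∀ l, u (0 :: l) = u l)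
    (hA2 : Assumption2 u)
    (l : List ℝ≥0) (hl : l.Pairwise (· ≥ ·)) :
    u l = ∑ i : Fin l.length,
      (u (List.replicate (i.1 + 1) (l.get i)) - u (List.replicate i.1 (l.get i))) := by
  induction l using reverseRecOn with
  | nil => simp [hempty]
  | append_singleton m x ih =>
    obtain ⟨hm, -, hmx⟩ := pairwise_append.1 hl
    have hmarg := hA2.marginal_eq_diag hsym hzero m fun y hy => hmx y hy x (mem_singleton_self x)
    have hlen : m.length + 1 = (m ++ [x]).length := by simp
    rw [← Fin.sum_congr' _ hlen, Fin.sum_univ_castSucc]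
    simp only [get_eq_getElem] at ih
    simp only [Fin.val_cast, Fin.val_castSucc, Fin.val_last, get_eq_getElem, Fin.is_lt,
      getElem_append_left, getElem_concat_length, ← ih hm]
    exact eq_add_of_sub_eq' hmarg
end

section
/- Under Assumptions 1 and 2 (u symmetric, nondecreasing, submodular, u(∅)=0, u(0,x)=u(x), and history-independence of the benefit of a prize with respect to larger prizes), the functions f_ℓ(x) = g_ℓ(x) - g_{ℓ-1}(x), where g_ℓ(x) = u(x repeated ℓ times), satisfy: f_ℓ(x) is nondecreasing in x for each ℓ. -/
open scoped NNReal

section Marginal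

variable {u : List ℝ≥0 → ℝ}

def marginal (u : List ℝ≥0 → ℝ) (l : List ℝ≥0) (x : ℝ≥0) : ℝ := u (x :: l) - u l

lemma marginal_perm (hsymm : IsSymmU u) {l l' : List ℝ≥0} (h : l.Perm l') (x : ℝ≥0) :
    marginal u l x = marginal u l' x := by
  rw [marginal, marginal, hsymm _ _ h, hsymm _ _ (h.cons x)]

lemma marginal_mono (hmono : IsMonoU u) (l : List ℝ≥0) : Monotone (marginal u l) :=
  fun _ _ hxy => sub_le_sub_right (hmono _ _ (.cons hxy (List.forall₂_refl l))) _

lemma marginal_cons_eq (hsymm : IsSymmU u) (hzero : ∀ l, u (0 :: l) = u l)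
    (hA2 : Assumption2 u) {x a b : ℝ≥0} (hxa : x ≤ a) (hab : a < b) (l : List ℝ≥0) :
    marginal u (b :: l) x = marginal u (a :: l) x := by
  have hcons : ∀ c d : ℝ≥0, u (l ++ [c, d]) = u (d :: c :: l) := fun c d =>
    hsymm _ _ (List.perm_append_comm.trans (.swap d c l))
  have h := hA2 l x a b hxa hab
  rwa [hcons, hcons, hcons, hcons, hzero, hzero] at h

lemma marginal_replicate_eq (hsymm : IsSymmU u) (hzero : ∀ l, u (0 :: l) = u l)
    (hA2 : Assumption2 u) {x y : ℝ≥0} (hxy : x < y) (k : ℕ) (l : List ℝ≥0) :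
    marginal u (List.replicate k y ++ l) x = marginal u (List.replicate k x ++ l) x := by
  induction k generalizing l with
  | zero => rfl
  | succ k ih =>
    calc marginal u (List.replicate (k + 1) y ++ l) x
        = marginal u (x :: (List.replicate k y ++ l)) x :=
          marginal_cons_eq hsymm hzero hA2 le_rfl hxy _
      _ = marginal u (List.replicate k y ++ x :: l) x :=
          marginal_perm hsymm List.perm_middle.symm x
      _ = marginal u (List.replicate (k + 1) x ++ l) x := by
          rw [ih, List.replicate_succ', List.append_assoc, List.singleton_append]

end Marginal

/-- Lemma 2(b), monotonicity part: under Assumptions 1 and 2, each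
`f_ℓ(x) = u(x,…,x) (ℓ times) - u(x,…,x) (ℓ-1 times)` is nondecreasing in `x`. -/
theorem stmt_5 (u : List ℝ≥0 → ℝ) (hA1 : Assumption1 u) (hA2 : Assumption2 u) (ℓ : ℕ) :
    Monotone (fun x : ℝ≥0 =>
      u (List.replicate (ℓ + 1) x) - u (List.replicate ℓ x)) := by
  obtain ⟨-, hzero, -, -, hsymm, hmono, -⟩ := hA1
  intro x y hxy
  change marginal u (List.replicate ℓ x) x ≤ marginal u (List.replicate ℓ y) y
  rcases hxy.eq_or_lt with rfl | hlt
  · rfl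
  calc marginal u (List.replicate ℓ x) x
      = marginal u (List.replicate ℓ y) x := by
        simpa only [List.append_nil] using (marginal_replicate_eq hsymm hzero hA2 hlt ℓ []).symm
    _ ≤ marginal u (List.replicate ℓ y) y := marginal_mono hmono _ hxy
end

section
/- Under Assumptions 1 and 2, the functions f_ℓ(x) = g_ℓ(x) - g_{ℓ-1}(x) with g_ℓ(x) = u(x,…,x) (ℓ times) satisfy f_ℓ(x) ≥ f_{ℓ+1}(x) for all x ≥ 0 and all ℓ ≥ 1. -/
open scoped NNReal

/-!
Submodularity applied to the tuples `(x, …, x, x, 0)` and `(x, …, x, 0, x)` (with `k` leading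
copies of `x`), whose meet and join are `(x, …, x, 0, 0)` and `(x, …, x, x, x)`, gives
`g_{k+2}(x) + g_k(x) ≤ 2 g_{k+1}(x)` once symmetry and `u(0, y) = u(y)` remove the zeros:
`ℓ ↦ g_ℓ(x)` is concave, i.e. its increments `f_ℓ(x)` decrease.
-/

section

variable {u : List ℝ≥0 → ℝ}

theorem IsSymmU.apply_append_zero_cons (hsymm : IsSymmU u) (hzero : ∀ l, u (0 :: l) = u l)
    (l₁ l₂ : List ℝ≥0) : u (l₁ ++ 0 :: l₂) = u (l₁ ++ l₂) :=
  (hsymm _ _ List.perm_middle).trans (hzero _)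

theorem IsSubmodU.diag_add_diag_le (hsub : IsSubmodU u) (r : List ℝ≥0) (a b : ℝ≥0) :
    u (r ++ [min a b, min a b]) + u (r ++ [max a b, max a b]) ≤
      u (r ++ [a, b]) + u (r ++ [b, a]) := by
  have h := hsub (r ++ [a, b]) (r ++ [b, a]) (by simp)
  simp only [List.zipWith_append (l₁ := r) (l₂ := r) rfl, List.zipWith_self, min_self,
    max_self, List.zipWith_cons_cons, List.map_id', min_comm b a, max_comm b a] at h
  exact h

theorem IsSubmodU.replicate_concave (hsub : IsSubmodU u) (hsymm : IsSymmU u)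
    (hzero : ∀ l, u (0 :: l) = u l) (k : ℕ) (x : ℝ≥0) :
    u (List.replicate (k + 2) x) + u (List.replicate k x) ≤
      2 * u (List.replicate (k + 1) x) := by
  set r := List.replicate k x
  have h := hsub.diag_add_diag_le r x 0
  have hxx : r ++ [x, x] = List.replicate (k + 2) x := by
    simp [r, List.replicate_succ']
  have hx : r ++ [x] = List.replicate (k + 1) x := (List.replicate_succ' ..).symm
  have h00 : u (r ++ [0, 0]) = u r := by
    rw [hsymm.apply_append_zero_cons hzero r [0], ← List.append_nil r,
      hsymm.apply_append_zero_cons hzero, List.append_nil]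
  have hx0 : u (r ++ [x, 0]) = u (List.replicate (k + 1) x) := by
    rw [← hx, show r ++ [x, 0] = (r ++ [x]) ++ 0 :: [] by simp,
      hsymm.apply_append_zero_cons hzero, List.append_nil]
  have h0x : u (r ++ [0, x]) = u (List.replicate (k + 1) x) := by
    rw [← hx, hsymm.apply_append_zero_cons hzero]
  rw [min_eq_right (zero_le : 0 ≤ x), max_eq_left (zero_le : 0 ≤ x), h00, hxx, hx0, h0x] at h
  linarith

end

theorem stmt_6_general (u : List ℝ≥0 → ℝ) (hA1 : Assumption1 u)
    (ℓ : ℕ) (hℓ : 1 ≤ ℓ) (x : ℝ≥0) :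
    u (List.replicate (ℓ + 1) x) - u (List.replicate ℓ x) ≤
      u (List.replicate ℓ x) - u (List.replicate (ℓ - 1) x) := by
  obtain ⟨k, rfl⟩ := Nat.exists_eq_add_of_le' hℓ
  obtain ⟨-, hzero, -, -, hsymm, -, hsub⟩ := hA1
  have h := hsub.replicate_concave hsymm hzero k x
  rw [Nat.add_sub_cancel]
  linarith

/-- Lemma 2(b), decrease in `ℓ`: under Assumptions 1 and 2,
`f_ℓ(x) ≥ f_{ℓ+1}(x)` for all `x` and all `ℓ ≥ 1`. -/
theorem stmt_6 (u : List ℝ≥0 → ℝ) (hA1 : Assumption1 u) (hA2 : Assumption2 u)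
    (ℓ : ℕ) (hℓ : 1 ≤ ℓ) (x : ℝ≥0) :
    u (List.replicate (ℓ + 1) x) - u (List.replicate ℓ x) ≤
      u (List.replicate ℓ x) - u (List.replicate (ℓ - 1) x) :=
  stmt_6_general u hA1 ℓ hℓ x
end

section
/- Let u : ℝ≥0 → ℝ≥0 denote the restriction of an Assumption-1-and-2-satisfying utility to single arguments, and define f(x) = u(x,x) - u(x). Then f is nondecreasing: for x ≤ x', f(x) ≤ f(x'). -/
open scoped NNReal

/-- With `f(x) = u(x,x) - u(x)`, under Assumptions 1 and 2 the function `f`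
is nondecreasing. -/
theorem stmt_8 (u : List ℝ≥0 → ℝ) (hA1 : Assumption1 u) (hA2 : Assumption2 u)
    (x x' : ℝ≥0) (h : x ≤ x') :
    u [x, x] - u [x] ≤ u [x', x'] - u [x'] := by
  obtain ⟨h0, hz, hnn, hc, hsym, hmono, hsub⟩ := hA1
  rcases eq_or_lt_of_le h with rfl | hlt
  · exact le_refl _
  · have key := hA2 [] x x x' le_rfl hlt
    simp only [List.nil_append] at key
    have e1 : ∀ y : ℝ≥0, u [y, 0] = u [y] := by
      intro y
      rw [hsym [y, 0] [0, y] (List.Perm.swap 0 y []), hz]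
    rw [e1, e1] at key
    have hm : u [x', x] ≤ u [x', x'] := by
      apply hmono
      exact List.Forall₂.cons le_rfl (List.Forall₂.cons h List.Forall₂.nil)
    linarith
end

section
/- With u satisfying Assumptions 1 and 2 and f(x) := u(x,x) - u(x), the function x ↦ u(x) - f(x) = 2u(x) - u(x,x) is nondecreasing on ℝ≥0. -/
open scoped NNReal

/-! With `f x = u [x, x] - u [x]`, Assumption 2 (with the larger prize moved from `x` to `y`)
gives `u [y, x] - u [y] = f x`, and submodularity at `(x, y), (y, 0)` gives
`f y ≤ u [x, y] - u [x] = f x + u [y] - u [x]`. -/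

variable {u : List ℝ≥0 → ℝ}

theorem IsSymmU.pair_comm (hsym : IsSymmU u) (a b : ℝ≥0) : u [a, b] = u [b, a] :=
  hsym _ _ (List.Perm.swap b a [])

theorem IsSymmU.pair_zero (hsym : IsSymmU u) (hzero : ∀ l, u (0 :: l) = u l) (a : ℝ≥0) :
    u [a, 0] = u [a] := by
  rw [hsym.pair_comm, hzero]

theorem Assumption2.pair_sub_pair_zero (hA2 : Assumption2 u) {x y : ℝ≥0} (hxy : x < y) :
    u [y, x] - u [y, 0] = u [x, x] - u [x, 0] :=
  hA2 [] x x y le_rfl hxy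

theorem IsSubmodU.pair (hsub : IsSubmodU u) {x y : ℝ≥0} (hxy : x ≤ y) :
    u [x, 0] + u [y, y] ≤ u [x, y] + u [y, 0] := by
  simpa [hxy] using hsub [x, y] [y, 0] rfl

/-- Under Assumptions 1 and 2, with `f(x) = u(x,x) - u(x)`, the function
`u - f = 2u(x) - u(x,x)` is nondecreasing on `ℝ≥0`. -/
theorem stmt_10 (u : List ℝ≥0 → ℝ) (hA1 : Assumption1 u) (hA2 : Assumption2 u) :
    Monotone (fun x : ℝ≥0 => 2 * u [x] - u [x, x]) := by
  intro x y hxy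
  rcases hxy.eq_or_lt with rfl | hlt
  · rfl
  obtain ⟨-, hzero, -, -, hsym, -, hsub⟩ := hA1
  have hdiag := hA2.pair_sub_pair_zero hlt
  have hsubmod := hsub.pair hxy
  have hx := hsym.pair_zero hzero x
  have hy := hsym.pair_zero hzero y
  have hcomm := hsym.pair_comm x y
  dsimp only
  linarith
end

section
/- If u is SPR compatible, i.e. u(x_S) = u(x₁) + Σ_{ℓ=2}^{|S|} f(x_ℓ) where x₁ ≥ x₂ ≥ ⋯ are the ordered entries, f(0) = u(0) = 0, and u, f, u - f are all nonnegative nondecreasing functions on ℝ≥0, then u (as a function on tuples) is symmetric, nondecreasing, and submodular, and satisfies u(∅) = 0 and u(0, x₂, …, x_k) = u(x₂, …, x_k). -/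
open scoped NNReal

/-!
Writing `g = U - f`, an SPR compatible utility is `u l = g (max l) + ∑ f(xᵢ)`, which also holds
for the empty tuple since `g 0 = 0`. The sum term is symmetric, monotone and modular, since
`{min a b, max a b} = {a, b}` coordinatewise. The maximum term is symmetric and monotone, and it
is submodular because the maximum of `l ∧ l'` is at most `min (max l) (max l')`, that of
`l ∨ l'` at most `max (max l) (max l')`, and `g` is monotone.
-/

namespace List

variable {α : Type*} [LinearOrder α]

theorem foldr_max_le_foldr_max {l l' : List α} (h : Forall₂ (· ≤ ·) l l') (b : α) :
    l.foldr max b ≤ l'.foldr max b := by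
  induction h with
  | nil => rfl
  | cons hab _ ih => exact max_le_max hab ih

theorem le_foldr_max (b : α) : ∀ l : List α, b ≤ l.foldr max b
  | [] => le_rfl
  | _ :: l => le_max_of_le_right (le_foldr_max b l)

theorem foldr_max_zipWith_min_le (b : α) : ∀ l l' : List α,
    (zipWith min l l').foldr max b ≤ min (l.foldr max b) (l'.foldr max b)
  | [], l' => by simpa using le_foldr_max b l'
  | l, [] => by simpa using le_foldr_max b l
  | a :: t, c :: s => by
    simp only [zipWith_cons_cons, foldr_cons, max_le_iff]
    exact ⟨min_le_min (le_max_left _ _) (le_max_left _ _),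
      (foldr_max_zipWith_min_le b t s).trans (min_le_min (le_max_right _ _) (le_max_right _ _))⟩

theorem foldr_max_zipWith_max_le (b : α) : ∀ l l' : List α,
    (zipWith max l l').foldr max b ≤ max (l.foldr max b) (l'.foldr max b)
  | [], _ => by simp
  | _, [] => by simp
  | a :: t, c :: s => by
    simp only [zipWith_cons_cons, foldr_cons, max_le_iff]
    exact ⟨⟨le_sup_of_le_left le_sup_left, le_sup_of_le_right le_sup_left⟩,
      (foldr_max_zipWith_max_le b t s).trans (max_le_max (le_max_right _ _) (le_max_right _ _))⟩

theorem sum_map_le_sum_map {M : Type*} [AddMonoid M] [Preorder M] [AddLeftMono M]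
    [AddRightMono M] {f : α → M} (hf : Monotone f) {l l' : List α}
    (h : Forall₂ (· ≤ ·) l l') : (l.map f).sum ≤ (l'.map f).sum :=
  Forall₂.sum_le_sum <| forall₂_map_left_iff.2 <| forall₂_map_right_iff.2 <|
    h.imp fun _ _ hab => hf hab

theorem sum_map_zipWith_min_add_sum_map_zipWith_max {M : Type*} [AddCommMonoid M] (f : α → M) :
    ∀ l l' : List α, l.length = l'.length →
      ((zipWith min l l').map f).sum + ((zipWith max l l').map f).sum
        = (l.map f).sum + (l'.map f).sum
  | [], [], _ => by simp
  | a :: t, c :: s, h => by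
    have ih := sum_map_zipWith_min_add_sum_map_zipWith_max f t s (by simpa using h)
    simp only [zipWith_cons_cons, map_cons, sum_cons]
    rw [add_add_add_comm, fn_min_add_fn_max, ih, add_add_add_comm]

end List

def sprUtility (g f : ℝ≥0 → ℝ) (l : List ℝ≥0) : ℝ :=
  g (l.foldr max 0) + (l.map f).sum

section sprUtility

variable {g f : ℝ≥0 → ℝ}

theorem isSymmU_sprUtility : IsSymmU (sprUtility g f) := fun _ _ h => by
  rw [sprUtility, sprUtility, h.foldr_op_eq, (h.map f).sum_eq]

theorem isMonoU_sprUtility (hg : Monotone g) (hf : Monotone f) :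
    IsMonoU (sprUtility g f) := fun _ _ h =>
  add_le_add (hg (List.foldr_max_le_foldr_max h 0)) (List.sum_map_le_sum_map hf h)

theorem isSubmodU_sprUtility (hg : Monotone g) : IsSubmodU (sprUtility g f) := by
  intro l l' hlen
  have hmax : g ((List.zipWith min l l').foldr max 0) + g ((List.zipWith max l l').foldr max 0)
      ≤ g (l.foldr max 0) + g (l'.foldr max 0) :=
    calc _ ≤ g (min (l.foldr max 0) (l'.foldr max 0)) + g (max (l.foldr max 0) (l'.foldr max 0)) :=
          add_le_add (hg (List.foldr_max_zipWith_min_le 0 l l'))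
            (hg (List.foldr_max_zipWith_max_le 0 l l'))
      _ = _ := fn_min_add_fn_max g _ _
  have hsum := List.sum_map_zipWith_min_add_sum_map_zipWith_max f l l' hlen
  simp only [sprUtility]
  linarith

theorem sprUtility_zero_cons (hf0 : f 0 = 0) (l : List ℝ≥0) :
    sprUtility g f (0 :: l) = sprUtility g f l := by
  simp [sprUtility, hf0]

end sprUtility

theorem stmt_11_general (u : List ℝ≥0 → ℝ) (U f : ℝ≥0 → ℝ)
    (hU0 : U 0 = 0) (hf0 : f 0 = 0)
    (hfmono : Monotone f) (hUfmono : Monotone (fun x => U x - f x))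
    (hempty : u [] = 0)
    (hSPR : ∀ l : List ℝ≥0, l ≠ [] →
      u l = U (l.foldr max 0) - f (l.foldr max 0) + (l.map f).sum) :
    IsSymmU u ∧ IsMonoU u ∧ IsSubmodU u ∧ u [] = 0 ∧
      (∀ l : List ℝ≥0, u (0 :: l) = u l) := by
  have hu : u = sprUtility (fun x => U x - f x) f := by
    funext l
    rcases eq_or_ne l [] with rfl | hl
    · simp [sprUtility, hempty, hU0, hf0]
    · exact hSPR l hl
  subst hu
  exact ⟨isSymmU_sprUtility, isMonoU_sprUtility hUfmono hfmono, isSubmodU_sprUtility hUfmono,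
    hempty, sprUtility_zero_cons hf0⟩

/-- If `u` is SPR compatible — on nonempty tuples
`u(x_S) = U(max_i x_i) - f(max_i x_i) + Σ_{i∈S} f(x_i)` with `U, f, U - f`
nonnegative nondecreasing and `U 0 = f 0 = 0` — then `u` is symmetric,
nondecreasing and submodular, vanishes on the empty tuple, and is unchanged
by prepending a zero. -/
theorem stmt_11 (u : List ℝ≥0 → ℝ) (U f : ℝ≥0 → ℝ)
    (hU0 : U 0 = 0) (hf0 : f 0 = 0)
    (hUmono : Monotone U) (hfmono : Monotone f) (hUfmono : Monotone (fun x => U x - f x))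
    (hUpos : ∀ x, 0 ≤ U x) (hfpos : ∀ x, 0 ≤ f x) (hUfpos : ∀ x, f x ≤ U x)
    (hempty : u [] = 0)
    (hSPR : ∀ l : List ℝ≥0, l ≠ [] →
      u l = U (l.foldr max 0) - f (l.foldr max 0) + (l.map f).sum) :
    IsSymmU u ∧ IsMonoU u ∧ IsSubmodU u ∧ u [] = 0 ∧
      (∀ l : List ℝ≥0, u (0 :: l) = u l) :=
  stmt_11_general u U f hU0 hf0 hfmono hUfmono hempty hSPR
end

section
/- Let ψ : ℕ → ℝ be concave (ψ(k+1) - ψ(k) nonincreasing) and increasing with ψ(0) = 0, and suppose a box has cost c > 0 and prize X ∈ {0,1} with P(X = 1) = p. Given that k prizes of value 1 have already been found, the generalized reservation value of the box equals max{0, (w_{k+1} - c/p)/(w_{k+1} - w_{k+2})}, where w_j = ψ(j) - ψ(j-1) (assuming w_{k+1} > w_{k+2}). -/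
/-!
Holding beats opening exactly when the expected gain of opening,
`p * (w_{k+1} - y * (w_{k+1} - w_{k+2}))`, is at most `c`. As `w_{k+1} > w_{k+2}`, this is the
half-line `y ≥ (w_{k+1} - c/p) / (w_{k+1} - w_{k+2})`; intersected with `y ≥ 0` it is the
half-line starting at the maximum of the two bounds.
-/

/-- Marginal utility increments `w j = ψ(j) - ψ(j-1)`. -/
noncomputable def wInc (ψ : ℕ → ℝ) (j : ℕ) : ℝ := ψ j - ψ (j - 1)

lemma hold_ge_open_iff {S w₁ w₂ c p y : ℝ} (hp : 0 < p) (hw : w₂ < w₁) :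
    S + w₁ * y ≥ -c + (S + w₁ * y) + p * ((1 - y) * w₁ + w₂ * y) ↔
      (w₁ - c / p) / (w₁ - w₂) ≤ y := by
  have gain : (1 - y) * w₁ + w₂ * y = w₁ - y * (w₁ - w₂) := by ring
  rw [gain, div_le_iff₀ (sub_pos.2 hw), sub_le_comm, le_div_iff₀' hp]
  constructor <;> intro <;> linarith

theorem stmt_13_general (ψ : ℕ → ℝ)
    (c p : ℝ) (hp : 0 < p) (k : ℕ)
    (hw : wInc ψ (k + 2) < wInc ψ (k + 1)) :
    IsLeast {y : ℝ | 0 ≤ y ∧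
        (∑ j ∈ Finset.range k, wInc ψ (j + 1)) + wInc ψ (k + 1) * y ≥
          -c + ((∑ j ∈ Finset.range k, wInc ψ (j + 1)) + wInc ψ (k + 1) * y) +
            p * ((1 - y) * wInc ψ (k + 1) + wInc ψ (k + 2) * y)}
      (max 0 ((wInc ψ (k + 1) - c / p) / (wInc ψ (k + 1) - wInc ψ (k + 2)))) := by
  exact ⟨⟨le_max_left _ _, (hold_ge_open_iff hp hw).2 (le_max_right _ _)⟩,
    fun y hy => max_le hy.1 ((hold_ge_open_iff hp hw).1 hy.2)⟩

/-- Example 1: with `ψ` concave increasing, `ψ(0)=0`, a box of cost `c > 0` and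
Bernoulli(`p`) prize, and `k` unit prizes already found, the generalized
reservation value — the least `y ≥ 0` such that
`Σw + w_{k+1}y ≥ -c + Σw + w_{k+1}y + p((1-y)w_{k+1} + w_{k+2}y)` — equals
`max 0 ((w_{k+1} - c/p)/(w_{k+1} - w_{k+2}))`. -/
theorem stmt_13 (ψ : ℕ → ℝ) (hψ0 : ψ 0 = 0) (hmono : StrictMono ψ)
    (hconc : ∀ k : ℕ, ψ (k + 2) - ψ (k + 1) ≤ ψ (k + 1) - ψ k)
    (c p : ℝ) (hc : 0 < c) (hp : 0 < p) (hp1 : p ≤ 1) (k : ℕ)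
    (hw : wInc ψ (k + 2) < wInc ψ (k + 1)) :
    IsLeast {y : ℝ | 0 ≤ y ∧
        (∑ j ∈ Finset.range k, wInc ψ (j + 1)) + wInc ψ (k + 1) * y ≥
          -c + ((∑ j ∈ Finset.range k, wInc ψ (j + 1)) + wInc ψ (k + 1) * y) +
            p * ((1 - y) * wInc ψ (k + 1) + wInc ψ (k + 2) * y)}
      (max 0 ((wInc ψ (k + 1) - c / p) / (wInc ψ (k + 1) - wInc ψ (k + 2)))) :=
  stmt_13_general ψ c p hp k hw
end

section
/- Under Assumption 1, if 0 < x_k* < ∞ (the reservation value of box k given uncovered prizes x, and the map y ↦ ∫[u(x,y,t) - u(x,y)] dF_k(t) is continuous and equals c_k at y = x_k*), then opening box k is weakly better than stopping: c_k ≤ ∫ [u(x, t) - u(x)] dF_k(t). -/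
open scoped NNReal

/-! At the reservation value `y`, the cost `c` is the expected marginal gain of the prize `t` on
top of `(x, y)`. Submodularity, after padding with zeros, says this gain is at most the gain of `t`
on top of `x` alone; integrating against `F` gives the claim. -/

theorem IsSymmU.apply_append_zero {u : List ℝ≥0 → ℝ} (hsymm : IsSymmU u)
    (hzero : ∀ l, u (0 :: l) = u l) (l : List ℝ≥0) : u (l ++ [0]) = u l := by
  rw [hsymm _ _ List.perm_append_comm, List.singleton_append, hzero]

theorem IsSubmodU.diminishing_returns {u : List ℝ≥0 → ℝ} (hsub : IsSubmodU u)
    (hsymm : IsSymmU u) (hzero : ∀ l, u (0 :: l) = u l) (x : List ℝ≥0) (y t : ℝ≥0) :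
    u (x ++ [y, t]) - u (x ++ [y]) ≤ u (x ++ [t]) - u x := by
  have hdrop := hsymm.apply_append_zero hzero
  have hswap : u (x ++ [0, t]) = u (x ++ [t]) := by
    rw [hsymm _ _ ((List.Perm.swap t 0 []).append_left x)]
    simpa using hdrop (x ++ [t])
  have hmeet : List.zipWith min (x ++ [y, 0]) (x ++ [0, t]) = x ++ [0, 0] := by
    rw [List.zipWith_append rfl, List.zipWith_self]; simp
  have hjoin : List.zipWith max (x ++ [y, 0]) (x ++ [0, t]) = x ++ [y, t] := by
    rw [List.zipWith_append rfl, List.zipWith_self]; simp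
  have hs := hsub (x ++ [y, 0]) (x ++ [0, t]) (by simp)
  rw [hmeet, hjoin] at hs
  have hy0 : u (x ++ [y, 0]) = u (x ++ [y]) := by simpa using hdrop (x ++ [y])
  have h00 : u (x ++ [0, 0]) = u x := by simpa using (hdrop (x ++ [0])).trans (hdrop x)
  linarith

open MeasureTheory

theorem stmt_17_general (u : List ℝ≥0 → ℝ) (hA1 : Assumption1 u)
    (F : Measure ℝ≥0) [IsProbabilityMeasure F]
    (hInt : ∀ l : List ℝ≥0, Integrable (fun t => u (l ++ [t])) F)
    (c : ℝ) (x : List ℝ≥0) (y : ℝ≥0)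
    (heq : c = ∫ t, (u (x ++ [y, t]) - u (x ++ [y])) ∂F) :
    c ≤ ∫ t, (u (x ++ [t]) - u x) ∂F := by
  obtain ⟨-, hzero, -, -, hsymm, -, hsub⟩ := hA1
  have hgain (l : List ℝ≥0) : Integrable (fun t => u (l ++ [t]) - u l) F :=
    (hInt l).sub (integrable_const _)
  rw [heq]
  refine integral_mono ?_ (hgain x) (hsub.diminishing_returns hsymm hzero x y)
  simpa using hgain (x ++ [y])

/-- If `0 < x_k* < ∞` and at the reservation value the indifference equality
`c_k = ∫ (u(x,x_k*,t) - u(x,x_k*)) dF_k(t)` holds (by continuity), then opening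
box `k` is weakly better than stopping: `c_k ≤ ∫ (u(x,t) - u(x)) dF_k(t)`. -/
theorem stmt_17 (u : List ℝ≥0 → ℝ) (hA1 : Assumption1 u)
    (F : Measure ℝ≥0) [IsProbabilityMeasure F]
    (hInt : ∀ l : List ℝ≥0, Integrable (fun t => u (l ++ [t])) F)
    (c : ℝ) (hc : 0 ≤ c) (x : List ℝ≥0) (y : ℝ≥0) (hy : 0 < y)
    (heq : c = ∫ t, (u (x ++ [y, t]) - u (x ++ [y])) ∂F) :
    c ≤ ∫ t, (u (x ++ [t]) - u x) ∂F :=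
  stmt_17_general u hA1 F hInt c x y heq
end

section
/- Let u satisfy Assumptions 1 and 2 and let x_k* be the reservation value of box k given uncovered prizes x, with 0 < x_k* < ∞. If the realized prize x_ℓ of another box satisfies x_ℓ ≥ x_k*, then the reservation value of box k after uncovering x_ℓ is 0: c_k ≥ ∫[u(x, x_ℓ, y, t) - u(x, x_ℓ, y)] dF_k(t) for all y ≥ 0, in particular y = 0. -/
/-! Since zeros are absorbed, submodularity of `u` says that the gain from adding a prize `t`
shrinks when a further prize `y` is present. Integrating over `t`, the expected gain from opening
the box after `y` is uncovered is at most the expected gain before, which the stopping inequality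
bounds by `c`. -/

open scoped NNReal

open MeasureTheory

section Marginal

variable {u : List ℝ≥0 → ℝ}

theorem IsSymmU.apply_insert_zero (hS : IsSymmU u) (hZ : ∀ l, u (0 :: l) = u l)
    (l m : List ℝ≥0) : u (l ++ 0 :: m) = u (l ++ m) := by
  rw [hS _ _ List.perm_middle, hZ]

theorem IsSubmodU.marginal_gain_le (hSub : IsSubmodU u) (hS : IsSymmU u)
    (hZ : ∀ l, u (0 :: l) = u l) (l : List ℝ≥0) (y t : ℝ≥0) :
    u (l ++ [y, t]) - u (l ++ [y]) ≤ u (l ++ [t]) - u l := by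
  -- compare `l ++ [y, 0]` and `l ++ [0, t]`, whose meet is `l ++ [0, 0]` and join `l ++ [y, t]`
  have h := hSub (l ++ [y, 0]) (l ++ [0, t]) (by simp)
  have hmin : List.zipWith min (l ++ [y, 0]) (l ++ [0, t]) = l ++ [0, 0] := by
    simp [List.zipWith_append, List.zipWith_self]
  have hmax : List.zipWith max (l ++ [y, 0]) (l ++ [0, t]) = l ++ [y, t] := by
    simp [List.zipWith_append, List.zipWith_self]
  have hzero : ∀ (m : List ℝ≥0) (a : ℝ≥0), u (m ++ [a, 0]) = u (m ++ [a]) := fun m a => by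
    simpa using hS.apply_insert_zero hZ (m ++ [a]) []
  have h00 : u (l ++ [0, 0]) = u l := by
    rw [hzero]
    simpa using hS.apply_insert_zero hZ l []
  have h0t : u (l ++ [0, t]) = u (l ++ [t]) := hS.apply_insert_zero hZ l [t]
  rw [hmin, hmax, h00, hzero, h0t] at h
  linarith

theorem IsSubmodU.integral_marginal_gain_le (hSub : IsSubmodU u) (hS : IsSymmU u)
    (hZ : ∀ l, u (0 :: l) = u l) (F : Measure ℝ≥0) [IsProbabilityMeasure F]
    (hInt : ∀ l : List ℝ≥0, Integrable (fun t => u (l ++ [t])) F) (l : List ℝ≥0) (y : ℝ≥0) :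
    ∫ t, (u (l ++ [y, t]) - u (l ++ [y])) ∂F ≤ (∫ t, u (l ++ [t]) ∂F) - u l := by
  have hIy : Integrable (fun t => u (l ++ [y, t])) F := by simpa using hInt (l ++ [y])
  calc ∫ t, (u (l ++ [y, t]) - u (l ++ [y])) ∂F
      ≤ ∫ t, (u (l ++ [t]) - u l) ∂F :=
        integral_mono (hIy.sub (integrable_const _)) ((hInt l).sub (integrable_const _))
          (hSub.marginal_gain_le hS hZ l y)
    _ = (∫ t, u (l ++ [t]) ∂F) - u l := by
        rw [integral_sub (hInt l) (integrable_const _), integral_const, probReal_univ, one_smul]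

end Marginal

theorem stmt_18_general (u : List ℝ≥0 → ℝ) (hA1 : Assumption1 u)
    (F : Measure ℝ≥0) [IsProbabilityMeasure F]
    (hInt : ∀ l : List ℝ≥0, Integrable (fun t => u (l ++ [t])) F)
    (c : ℝ) (x : List ℝ≥0) (xℓ : ℝ≥0)
    (hstop : -c + ∫ t, u (x ++ [xℓ, t]) ∂F ≤ u (x ++ [xℓ])) :
    ∀ y : ℝ≥0, (∫ t, (u (x ++ [xℓ, y, t]) - u (x ++ [xℓ, y])) ∂F) ≤ c := by
  obtain ⟨-, hZ, -, -, hS, -, hSub⟩ := hA1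
  intro y
  have h := hSub.integral_marginal_gain_le hS hZ F hInt (x ++ [xℓ]) y
  simp only [List.append_assoc, List.cons_append, List.nil_append] at h
  linarith

/-- If, given uncovered prizes `x`, a newly uncovered prize `x_ℓ` satisfies the
stopping inequality `u(x, x_ℓ) ≥ -c_k + ∫ u(x, x_ℓ, t) dF_k(t)` (as happens when
`x_ℓ ≥ x_k*`), then the reservation value of box `k` after uncovering `x_ℓ` is
`0`: for every `y ≥ 0`, `c_k ≥ ∫ (u(x, x_ℓ, y, t) - u(x, x_ℓ, y)) dF_k(t)`. -/
theorem stmt_18 (u : List ℝ≥0 → ℝ) (hA1 : Assumption1 u) (hA2 : Assumption2 u)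
    (F : Measure ℝ≥0) [IsProbabilityMeasure F]
    (hInt : ∀ l : List ℝ≥0, Integrable (fun t => u (l ++ [t])) F)
    (c : ℝ) (hc : 0 ≤ c) (x : List ℝ≥0) (xℓ : ℝ≥0)
    (hstop : -c + ∫ t, u (x ++ [xℓ, t]) ∂F ≤ u (x ++ [xℓ])) :
    ∀ y : ℝ≥0, (∫ t, (u (x ++ [xℓ, y, t]) - u (x ++ [xℓ, y])) ∂F) ≤ c :=
  stmt_18_general u hA1 F hInt c x xℓ hstop
end

section
/- For boxes with Bernoulli prizes (X_i ∈ {0,1}, P(X_i = 1) = p_i, cost c_i) and concave increasing ψ with increments w_j = ψ(j) - ψ(j-1), the expected payoff of opening three boxes i, j, k in that order (stopping only when all opened) equals (c_k/p_k)·p_i p_j p_k + σ, where σ is symmetric in (i, j, k); hence if c_i/p_i < c_j/p_j < c_k/p_k, opening in order i, j, k yields strictly larger expected payoff than opening in order k, j, i. -/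
/-- Expected payoff of opening three Bernoulli boxes `a`, `b`, `c` (each a pair
(cost, success probability)) in that order, with rewards `f₁` for the first unit
prize found and `f₂` for the second, stopping after two prizes are found. -/
def triplePayoff (f₁ f₂ : ℝ) (a b c : ℝ × ℝ) : ℝ :=
  -a.1 + a.2 * (f₁ - b.1 + b.2 * f₂ + (1 - b.2) * (-c.1 + c.2 * f₂)) +
    (1 - a.2) * (-b.1 + b.2 * (f₁ - c.1 + c.2 * f₂) + (1 - b.2) * (-c.1 + c.2 * f₁))

/-- The triple payoff equals `(c.1/c.2)·a.2·b.2·c.2` plus a symmetric term; hence when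
`c_i/p_i < c_j/p_j < c_k/p_k` it is strictly better to open in order `i,j,k` than `k,j,i`. -/
theorem stmt_19 (f₁ f₂ : ℝ) (hf : f₂ ≤ f₁)
    (ci pi cj pj ck pk : ℝ) (hpi : 0 < pi) (hpj : 0 < pj) (hpk : 0 < pk) :
    (∃ σ : (ℝ × ℝ) → (ℝ × ℝ) → (ℝ × ℝ) → ℝ,
      (∀ a b c : ℝ × ℝ, σ a b c = σ b a c ∧ σ a b c = σ a c b) ∧
      (∀ a b c : ℝ × ℝ, 0 < a.2 → 0 < b.2 → 0 < c.2 →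
        triplePayoff f₁ f₂ a b c = (c.1 / c.2) * (a.2 * b.2 * c.2) + σ a b c)) ∧
    (ci / pi < cj / pj → cj / pj < ck / pk →
      triplePayoff f₁ f₂ (ck, pk) (cj, pj) (ci, pi) <
        triplePayoff f₁ f₂ (ci, pi) (cj, pj) (ck, pk)) := by
  constructor
  · refine ⟨fun a b c => triplePayoff f₁ f₂ a b c - c.1 * a.2 * b.2, ?_, ?_⟩
    · intro a b c
      constructor <;> (simp only [triplePayoff]; ring)
    · intro a b c ha hb hc
      field_simp
      ring
  · intro h1 h2
    have hik : ci / pi < ck / pk := h1.trans h2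
    have h : ci * pk < ck * pi := by
      have := (div_lt_div_iff₀ hpi hpk).mp hik
      linarith
    have key : triplePayoff f₁ f₂ (ci, pi) (cj, pj) (ck, pk) -
        triplePayoff f₁ f₂ (ck, pk) (cj, pj) (ci, pi) = (ck * pi - ci * pk) * pj := by
      simp only [triplePayoff]; ring
    nlinarith [mul_pos (sub_pos.mpr h) hpj]
end
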